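/- Let f : Z → ℝ be smooth on a closed surface Z and η a 1-form on Z such that f·dη + η ∧ df is a volume form. Then f must vanish somewhere on Z: the dividing set f⁻¹(0) is non-empty. -/

import Mathlib

/-! Where `f` has no zeros, `f • dη + η ∧ df = f² • d(f⁻¹ • η)`: the quotient rule turns the
twisted differential into a positive multiple of an exact form. Rescaling by the nowhere-vanishing
`f⁻²` would then give an exact volume form, whose integral vanishes by Stokes' theorem. -/

section TwistedDifferential

variable {R Ω1 Ω2 : Type*} [CommRing R] [AddCommGroup Ω1] [AddCommGroup Ω2]
  [Module R Ω1] [Module R Ω2]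

theorem mul_self_smul_map_eq_neg_map_of_mul_eq_one (d0 : R →+ Ω1)
    (hLeibniz0 : ∀ g h : R, d0 (g * h) = g • d0 h + h • d0 g) {a b : R} (hab : a * b = 1) :
    (a * a) • d0 b = -d0 a := by
  let D : Derivation ℤ R Ω1 := Derivation.mk' d0.toIntLinearMap hLeibniz0
  have hda : d0 a = -a ^ 2 • d0 b := D.leibniz_of_mul_eq_one hab
  rw [hda, sq, neg_smul, neg_neg]

theorem smul_d_add_wedge_eq_mul_self_smul_d_smul (d0 : R →+ Ω1) (d1 : Ω1 →+ Ω2)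
    (wedge : Ω1 → Ω1 → Ω2)
    (hLeibniz0 : ∀ g h : R, d0 (g * h) = g • d0 h + h • d0 g)
    (hLeibniz1 : ∀ (g : R) (η : Ω1), d1 (g • η) = g • d1 η + wedge (d0 g) η)
    (hwedge_smul : ∀ (g : R) (a b : Ω1), wedge (g • a) b = g • wedge a b)
    (hwedge_anti : ∀ a b : Ω1, wedge a b = -wedge b a)
    {f g : R} (hfg : f * g = 1) (η : Ω1) :
    f • d1 η + wedge η (d0 f) = (f * f) • d1 (g • η) := by
  have hdg := mul_self_smul_map_eq_neg_map_of_mul_eq_one d0 hLeibniz0 hfg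
  have hneg : wedge (-d0 f) η = -wedge (d0 f) η := by
    simpa using hwedge_smul (-1) (d0 f) η
  rw [hLeibniz1, smul_add, smul_smul, ← hwedge_smul, hdg, hneg, ← hwedge_anti,
    show f * f * g = f by rw [mul_assoc, hfg, mul_one]]

end TwistedDifferential

theorem no_nonvanishing_dividing_function_general
    {Z : Type*}
    {Ω1 Ω2 : Type*} [AddCommGroup Ω1] [AddCommGroup Ω2]
    [Module (Z → ℝ) Ω1] [Module (Z → ℝ) Ω2]
    (d0 : (Z → ℝ) →+ Ω1) (d1 : Ω1 →+ Ω2)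
    (wedge : Ω1 → Ω1 → Ω2)
    (hLeibniz0 : ∀ g h : Z → ℝ, d0 (g * h) = g • d0 h + h • d0 g)
    (hLeibniz1 : ∀ (g : Z → ℝ) (η : Ω1), d1 (g • η) = g • d1 η + wedge (d0 g) η)
    (hwedge_smul : ∀ (g : Z → ℝ) (a b : Ω1), wedge (g • a) b = g • wedge a b)
    (hwedge_anti : ∀ a b : Ω1, wedge a b = -wedge b a)
    (IsVolumeForm : Ω2 → Prop)
    (integral : Ω2 → ℝ)
    (hStokes : ∀ η : Ω1, integral (d1 η) = 0)
    (hVolInt : ∀ μ : Ω2, IsVolumeForm μ → integral μ ≠ 0)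
    (hVolSmul : ∀ (g : Z → ℝ) (μ : Ω2), (∀ x, g x ≠ 0) → IsVolumeForm μ →
      IsVolumeForm (g • μ))
    (f : Z → ℝ) (hf : ∀ x, f x ≠ 0) (η : Ω1)
    (hvol : IsVolumeForm (f • d1 η + wedge η (d0 f))) :
    False := by
  have hfg : f * f⁻¹ = 1 := funext fun x => mul_inv_cancel₀ (hf x)
  have hexact : f • d1 η + wedge η (d0 f) = (f * f) • d1 (f⁻¹ • η) :=
    smul_d_add_wedge_eq_mul_self_smul_d_smul d0 d1 wedge hLeibniz0 hLeibniz1 hwedge_smul hwedge_anti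
      hfg η
  have hrescaled : (f⁻¹ * f⁻¹) • (f • d1 η + wedge η (d0 f)) = d1 (f⁻¹ • η) := by
    rw [hexact, smul_smul, show f⁻¹ * f⁻¹ * (f * f) = 1 by linear_combination (1 + f * f⁻¹) * hfg,
      one_smul]
  have hinv : ∀ x, (f⁻¹ * f⁻¹) x ≠ 0 := fun x =>
    mul_ne_zero (inv_ne_zero (hf x)) (inv_ne_zero (hf x))
  have hvol' := hVolSmul (f⁻¹ * f⁻¹) _ hinv hvol
  rw [hrescaled] at hvol'
  exact hVolInt _ hvol' (hStokes _)

/-- on a closed surface `Z` there are no smooth nowhere-vanishing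
`f : Z → ℝ` and 1-form `η` such that `f·dη + η ∧ df` is a volume form.
The graded de Rham data on `Z` is abstracted: `Ω¹`, `Ω²` are modules over the
functions `Z → ℝ`, with differentials `d0`, `d1`, a wedge `Ω¹ × Ω¹ → Ω²`
satisfying the Leibniz rules and antisymmetry, and integration of 2-forms
satisfying Stokes' theorem; a volume form has nonzero integral, and scaling a
volume form by a nowhere-vanishing function again gives a volume form. -/
theorem no_nonvanishing_dividing_function
    {Z : Type*} [TopologicalSpace Z] [CompactSpace Z]
    {Ω1 Ω2 : Type*} [AddCommGroup Ω1] [AddCommGroup Ω2]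
    [Module (Z → ℝ) Ω1] [Module (Z → ℝ) Ω2]
    (d0 : (Z → ℝ) →+ Ω1) (d1 : Ω1 →+ Ω2)
    (wedge : Ω1 → Ω1 → Ω2)
    (hLeibniz0 : ∀ g h : Z → ℝ, d0 (g * h) = g • d0 h + h • d0 g)
    (hLeibniz1 : ∀ (g : Z → ℝ) (η : Ω1), d1 (g • η) = g • d1 η + wedge (d0 g) η)
    (hwedge_smul : ∀ (g : Z → ℝ) (a b : Ω1), wedge (g • a) b = g • wedge a b)
    (hwedge_anti : ∀ a b : Ω1, wedge a b = -wedge b a)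
    (IsVolumeForm : Ω2 → Prop)
    (integral : Ω2 → ℝ)
    (hStokes : ∀ η : Ω1, integral (d1 η) = 0)
    (hVolInt : ∀ μ : Ω2, IsVolumeForm μ → integral μ ≠ 0)
    (hVolSmul : ∀ (g : Z → ℝ) (μ : Ω2), (∀ x, g x ≠ 0) → IsVolumeForm μ →
      IsVolumeForm (g • μ))
    (f : Z → ℝ) (hf : ∀ x, f x ≠ 0) (η : Ω1)
    (hvol : IsVolumeForm (f • d1 η + wedge η (d0 f))) :
    False :=
  no_nonvanishing_dividing_function_general d0 d1 wedge hLeibniz0 hLeibniz1 hwedge_smul hwedge_anti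
    IsVolumeForm integral hStokes hVolInt hVolSmul f hf η hvol
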